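/- Let R be an integral domain, N ≥ 1, and let A be the finite-dimensional evolution algebra over R on the basis x_1, …, x_N with structure coefficient matrix C. Then A is nilpotent if and only if there exists a permutation σ of {1, …, N} (an ordering of the generators) such that the reordered structure coefficient matrix is strictly upper triangular, i.e. C(σ(k), σ(i)) = 0 whenever k ≥ i. (Theorem 2.6) -/

import Mathlib

/-!
Finite-dimensional evolution algebra over a commutative ring `R` on the basis
`x_1, …, x_N` (the standard basis of `Fin N → R`), with structure coefficient
matrix `C`: `x_i · x_i = ∑_k C(k,i) • x_k` and `x_i · x_j = 0` for `i ≠ j`;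
concretely `(a · b)(k) = ∑_i a(i) * b(i) * C(k,i)`.
-/
def evolMulFin {R : Type*} [CommRing R] {N : ℕ} (C : Matrix (Fin N) (Fin N) R)
    (a b : Fin N → R) : Fin N → R :=
  fun k => ∑ i, a i * b i * C k i

/-- Left-normed products: `lnp mul f m = ((f 0 · f 1) · f 2) ⋯ · f m`
is the left-normed product of the `m + 1` elements `f 0, …, f m`. -/
def lnp {A : Type*} (mul : A → A → A) (f : ℕ → A) : ℕ → A
  | 0 => f 0
  | m + 1 => mul (lnp mul f m) (f (m + 1))

/-!
Write `i → k` when `C k i ≠ 0`, i.e. when `x_k` occurs in `x_i²`. Multiplying by basis vectors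
along a walk `c 0 → c 1 → ⋯` gives left-normed products whose `c m`-coordinate is the product of
the coefficients along the walk, nonzero over a domain; so nilpotency forbids infinite walks, the
relation is well founded, and sorting the generators by rank orders them so that `C` is strictly
upper triangular. Conversely, for such an ordering a product of `m + 1` factors vanishes on the
last `m` generators, since each coordinate of `a · b` only sees the strictly later coordinates.
-/

theorem Fin.exists_perm_forall_not_rel_of_wellFounded {n : ℕ} {r : Fin n → Fin n → Prop}
    (hr : WellFounded r) : ∃ σ : Equiv.Perm (Fin n), ∀ k i, i ≤ k → ¬ r (σ k) (σ i) := by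
  have : IsWellFounded (Fin n) r := ⟨hr⟩
  let rank := IsWellFounded.rank r
  refine ⟨Tuple.sort rank, fun k i hik hki => ?_⟩
  exact (Tuple.monotone_sort rank hik).not_gt (IsWellFounded.rank_lt_of_rel hki)

namespace EvolutionAlgebra

variable {R : Type*} [CommRing R] {N : ℕ} (C : Matrix (Fin N) (Fin N) R)

theorem evolMulFin_single_one_apply (a : Fin N → R) (i k : Fin N) :
    evolMulFin C a (Pi.single i 1) k = a i * C k i := by
  rw [evolMulFin, Finset.sum_eq_single i (fun j _ hj => by simp [hj]) (by simp)]
  simp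

/-- The factors are `e_{c 0}, e_{c 0}, e_{c 1}, e_{c 2}, …` (`0 - 1 = 0` in `ℕ`). -/
theorem lnp_single_walk_apply_ne_zero [IsDomain R] (c : ℕ → Fin N)
    (hc : ∀ j, C (c (j + 1)) (c j) ≠ 0) (m : ℕ) :
    lnp (evolMulFin C) (fun j => Pi.single (c (j - 1)) 1) m (c m) ≠ 0 := by
  induction m with
  | zero => simp [lnp]
  | succ m ih =>
    rw [lnp.eq_2, evolMulFin_single_one_apply]
    exact mul_ne_zero ih (hc m)

theorem wellFounded_of_lnp_eq_zero [IsDomain R] {n : ℕ}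
    (hn : ∀ f : ℕ → (Fin N → R), lnp (evolMulFin C) f n = 0) :
    WellFounded fun k i => C k i ≠ 0 := by
  refine wellFounded_iff_isEmpty_descending_chain.mpr ⟨fun ⟨c, hc⟩ => ?_⟩
  exact lnp_single_walk_apply_ne_zero C c hc n (by rw [hn]; rfl)

variable {C}

theorem lnp_apply_eq_zero_of_triangular {σ : Equiv.Perm (Fin N)}
    (hσ : ∀ k i, i ≤ k → C (σ k) (σ i) = 0) (f : ℕ → (Fin N → R)) (m : ℕ) (k : Fin N)
    (hk : N ≤ k + m) : lnp (evolMulFin C) f m (σ k) = 0 := by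
  induction m generalizing k with
  | zero => omega
  | succ m ih =>
    rw [lnp.eq_2, evolMulFin, ← Equiv.sum_comp σ]
    refine Finset.sum_eq_zero fun i _ => ?_
    rcases le_or_gt i k with hik | hki
    · rw [hσ k i hik, mul_zero]
    · rw [ih i (by rw [Fin.lt_def] at hki; omega), zero_mul, zero_mul]

theorem lnp_eq_zero_of_triangular {σ : Equiv.Perm (Fin N)}
    (hσ : ∀ k i, i ≤ k → C (σ k) (σ i) = 0) (f : ℕ → (Fin N → R)) {m : ℕ} (hm : N ≤ m) :
    lnp (evolMulFin C) f m = 0 := by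
  funext k
  simpa using lnp_apply_eq_zero_of_triangular hσ f m (σ.symm k) (by omega)

end EvolutionAlgebra

open EvolutionAlgebra in
theorem nilpotent_iff_strictly_upper_triangular {R : Type*} [CommRing R]
    [IsDomain R] {N : ℕ} (C : Matrix (Fin N) (Fin N) R) :
    (∃ n : ℕ, 2 ≤ n ∧ ∀ f : ℕ → (Fin N → R), lnp (evolMulFin C) f (n - 1) = 0) ↔
    (∃ σ : Equiv.Perm (Fin N), ∀ k i : Fin N, i ≤ k → C (σ k) (σ i) = 0) := by
  constructor
  · rintro ⟨n, -, hn⟩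
    simpa using Fin.exists_perm_forall_not_rel_of_wellFounded (wellFounded_of_lnp_eq_zero C hn)
  · rintro ⟨σ, hσ⟩
    exact ⟨N + 2, by omega, fun f => lnp_eq_zero_of_triangular hσ f (by omega)⟩
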